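/- The optimal quadrature formula on [a,b] with coefficients C_{β,ω}[a,b] is exact for linear functions: for ω ≠ 0, ∑_{β=0}^{N} C_{β,ω}[a,b]·(hβ + a) = ∫_a^b e^{2πiωx}·x dx = (e^{2πiωb}b − e^{2πiωa}a)/(2πiω) − (e^{2πiωb} − e^{2πiωa})/(2πiω)². -/

import Mathlib

open Real Complex

lemma algA' (z h a : ℂ) (N : ℕ) (hN : 1 ≤ N) :
    (1 - z) * a * z + (2 * z - z ^ 2 - 1) * (∑ β ∈ Finset.Ico 1 N, z ^ β * (h * β + a))
      + (z - 1) * z ^ N * (h * N + a) = h * (z ^ N - 1) * z := by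
  induction N, hN using Nat.le_induction with
  | base => simp; ring
  | succ n hn ih =>
    rw [Finset.sum_Ico_succ_top hn]
    push_cast
    linear_combination ih

lemma keyAlg' (z w h a : ℂ) (N : ℕ) (hN : 1 ≤ N) :
    h * (1 + w - z) * z * a + h * (2 * z - z ^ 2 - 1) * (∑ β ∈ Finset.Ico 1 N, z ^ β * (h * β + a))
      + h * (z - w * z - 1) * z ^ N * (h * N + a)
    = -(h * (z ^ N * (h * N + a) - a) * z * w) + h ^ 2 * (z ^ N - 1) * z := by
  linear_combination h * algA' z h a N hN

lemma keyAlg (z w h a : ℂ) (hz : z ≠ 0) (hw : w ≠ 0) (N : ℕ) (hN : 1 ≤ N) :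
    -(h * (1 + w - z) / w ^ 2 * a)
      - h * (2 - z - z⁻¹) / w ^ 2 * (∑ β ∈ Finset.Ico 1 N, z ^ β * (h * β + a))
      - h * (1 - w - z⁻¹) / w ^ 2 * (z ^ N * (h * N + a))
    = h * (z ^ N * (h * N + a) - a) / w - h ^ 2 * (z ^ N - 1) / w ^ 2 := by
  set T := ∑ β ∈ Finset.Ico 1 N, z ^ β * (h * β + a) with hT
  set P := z ^ N * (h * N + a) with hP
  set Q := z ^ N - 1 with hQ
  have A : h * (1 + w - z) * z * a + h * (2 * z - z ^ 2 - 1) * T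
      + h * (z - w * z - 1) * P = -(h * (P - a) * z * w) + h ^ 2 * Q * z := by
    linear_combination keyAlg' z w h a N hN
  have hzw : z * w ^ 2 ≠ 0 := mul_ne_zero hz (pow_ne_zero 2 hw)
  have L1 : -(h * (1 + w - z) / w ^ 2 * a) - h * (2 - z - z⁻¹) / w ^ 2 * T
      - h * (1 - w - z⁻¹) / w ^ 2 * P
      = (-(h * (1 + w - z) * z * a) - h * (2*z - z^2 - 1) * T - h * (z - w*z - 1) * P)
          / (z * w ^ 2) := by
    rw [eq_div_iff hzw]; field_simp
  have R1 : h * (P - a) / w - h ^ 2 * Q / w ^ 2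
      = (-(-(h * (P - a) * z * w) + h ^ 2 * Q * z)) / (z * w ^ 2) := by
    rw [eq_div_iff hzw]; field_simp; ring
  rw [L1, R1]
  congr 1
  linear_combination -A

lemma integral_exp_mul (a b : ℝ) (c : ℂ) (hc : c ≠ 0) :
    ∫ x in a..b, Complex.exp (c * x) * x
      = (Complex.exp (c * b) * b / c - Complex.exp (c * b) / c ^ 2)
        - (Complex.exp (c * a) * a / c - Complex.exp (c * a) / c ^ 2) := by
  have hder : ∀ x ∈ Set.uIcc a b,
      HasDerivAt (fun y : ℝ => Complex.exp (c * y) * y / c - Complex.exp (c * y) / c ^ 2)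
        (Complex.exp (c * x) * x) x := by
    intro x _
    have h1 : HasDerivAt (fun y : ℝ => Complex.exp (c * y)) (Complex.exp (c * x) * c) x := by
      have h2 : HasDerivAt (fun z : ℂ => Complex.exp (c * z)) (Complex.exp (c * x) * c) (x : ℂ) := by
        have h4 := (Complex.hasDerivAt_exp (c * x)).comp (x : ℂ)
          ((hasDerivAt_id (x : ℂ)).const_mul c)
        rw [mul_one] at h4
        exact h4
      exact h2.comp_ofReal
    have hx : HasDerivAt (fun y : ℝ => (y : ℂ)) 1 x := by
      have h5 := Complex.ofRealCLM.hasDerivAt (x := x)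
      exact h5
    have h3 := ((h1.mul hx).div_const c).sub (h1.div_const (c ^ 2))
    refine h3.congr_deriv ?_
    field_simp
    ring
  have hint : IntervalIntegrable (fun x : ℝ => Complex.exp (c * x) * x)
      MeasureTheory.volume a b := by
    apply Continuous.intervalIntegrable
    exact (Complex.continuous_exp.comp (continuous_const.mul Complex.continuous_ofReal)).mul
      Complex.continuous_ofReal
  exact intervalIntegral.integral_eq_sub_of_hasDerivAt hder hint

noncomputable def Cab (a b ω : ℝ) (N : ℕ) (β : ℕ) : ℂ :=
  let h : ℝ := (b - a) / N
  if β = 0 then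
    (h : ℂ) * (1 + 2 * π * I * ω * h - Complex.exp (2 * π * I * ω * h)) / (2 * π * ω * h) ^ 2
      * Complex.exp (2 * π * I * ω * a)
  else if β = N then
    (h : ℂ) * (1 - 2 * π * I * ω * h - Complex.exp (-(2 * π * I * ω * h))) / (2 * π * ω * h) ^ 2
      * Complex.exp (2 * π * I * ω * b)
  else
    (h : ℂ) * (2 * (1 - Real.cos (2 * π * ω * h))) / (2 * π * ω * h) ^ 2
      * Complex.exp (2 * π * I * ω * (h * β + a))

theorem stmt18 (a b : ℝ) (hab : a < b) (ω : ℝ) (hω : ω ≠ 0) (N : ℕ) (hN : 1 ≤ N) :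
    (∑ β ∈ Finset.range (N + 1), Cab a b ω N β * (((b - a) / N * β + a : ℝ) : ℂ))
      = ∫ x in a..b, Complex.exp (2 * π * I * ω * x) * (x : ℂ) ∧
    (∑ β ∈ Finset.range (N + 1), Cab a b ω N β * (((b - a) / N * β + a : ℝ) : ℂ))
      = (Complex.exp (2 * π * I * ω * b) * b - Complex.exp (2 * π * I * ω * a) * a)
          / (2 * π * I * ω)
        - (Complex.exp (2 * π * I * ω * b) - Complex.exp (2 * π * I * ω * a))
          / (2 * π * I * ω) ^ 2 := by
  have hNR : (N : ℝ) ≠ 0 := Nat.cast_ne_zero.mpr (by omega)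
  set hr : ℝ := (b - a) / N with hhr
  have hhr0 : hr ≠ 0 := by
    have : (0:ℝ) < hr := div_pos (by linarith) (by exact_mod_cast Nat.pos_of_ne_zero (by omega))
    exact ne_of_gt this
  set c : ℂ := 2 * π * I * ω with hcdef
  have hc : c ≠ 0 := by
    refine mul_ne_zero (mul_ne_zero (mul_ne_zero two_ne_zero ?_) Complex.I_ne_zero) ?_
    · exact Complex.ofReal_ne_zero.mpr Real.pi_ne_zero
    · exact Complex.ofReal_ne_zero.mpr hω
  set w : ℂ := c * hr with hwdef
  have hw : w ≠ 0 := mul_ne_zero hc (Complex.ofReal_ne_zero.mpr hhr0)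
  set z : ℂ := Complex.exp w with hzdef
  set E : ℂ := Complex.exp (c * a) with hEdef
  have hz : z ≠ 0 := Complex.exp_ne_zero w
  have hb : b = hr * N + a := by rw [hhr, div_mul_cancel₀ _ hNR]; ring
  have hD : (2 * (π:ℂ) * ω * hr) ^ 2 = -w ^ 2 := by
    rw [hwdef, hcdef]
    ring_nf
    simp [Complex.I_sq]
  have hθ : w = ((2 * π * ω * hr : ℝ) : ℂ) * I := by
    rw [hwdef, hcdef]; push_cast; ring
  have hcos : ((2 : ℂ) * (1 - ((Real.cos (2 * π * ω * hr) : ℝ) : ℂ))) = 2 - z - z⁻¹ := by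
    rw [Complex.ofReal_cos, hzdef, ← Complex.exp_neg, hθ]
    rw [show -(((2 * π * ω * hr : ℝ):ℂ) * I) = ((-(2 * π * ω * hr) : ℝ):ℂ) * I by push_cast; ring]
    rw [Complex.exp_mul_I, Complex.exp_mul_I, Complex.ofReal_neg, Complex.cos_neg, Complex.sin_neg]
    ring
  have hexpa : Complex.exp (2 * π * I * (ω:ℂ) * (a:ℝ)) = E := rfl
  have hexpb : Complex.exp (c * b) = z ^ N * E := by
    rw [hzdef, hEdef, ← Complex.exp_nat_mul, ← Complex.exp_add]
    congr 1
    rw [hwdef, hb]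
    push_cast
    ring
  have hwe : 2 * (π:ℂ) * I * (ω:ℂ) * ((hr:ℝ):ℂ) = w := rfl
  have hzi : Complex.exp (-w) = z⁻¹ := by rw [hzdef, Complex.exp_neg]
  have e0 : Cab a b ω N 0 * (((hr * (0:ℕ) + a : ℝ)) : ℂ)
      = E * (-(((hr:ℂ) * (1 + w - z) / w ^ 2 * (a:ℂ)))) := by
    simp only [Cab]
    rw [if_pos trivial, ← hhr, hwe, ← hzdef, hD, hexpa]
    push_cast
    rw [div_neg]
    ring
  have eN : Cab a b ω N N * (((hr * (N:ℕ) + a : ℝ)) : ℂ)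
      = E * (-(((hr:ℂ) * (1 - w - z⁻¹) / w ^ 2 * (z ^ N * ((hr:ℂ) * N + (a:ℂ)))))) := by
    simp only [Cab]
    rw [if_neg (by omega), if_pos trivial, ← hhr, hwe, hzi, hexpb, hD]
    push_cast
    rw [div_neg]
    ring
  have emid : ∑ β ∈ Finset.Ico 1 N, Cab a b ω N β * (((hr * (β:ℕ) + a : ℝ)) : ℂ)
      = E * (-(((hr:ℂ) * (2 - z - z⁻¹) / w ^ 2
          * (∑ β ∈ Finset.Ico 1 N, z ^ β * ((hr:ℂ) * β + (a:ℂ)))))) := by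
    have step1 : ∀ β ∈ Finset.Ico 1 N, Cab a b ω N β * (((hr * (β:ℕ) + a : ℝ)) : ℂ)
        = E * (-(((hr:ℂ) * (2 - z - z⁻¹) / w ^ 2 * (z ^ β * ((hr:ℂ) * β + (a:ℂ)))))) := by
      intro β hβ
      have hβ1 : β ≠ 0 := by simp at hβ; omega
      have hβ2 : β ≠ N := by simp at hβ; omega
      simp only [Cab]
      rw [if_neg hβ1, if_neg hβ2, ← hhr, hD]
      rw [show 2 * (π:ℂ) * I * (ω:ℂ) * ((hr:ℝ) * (β:ℕ) + (a:ℝ)) = (β:ℕ) * w + c * a by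
        rw [hwdef, hcdef]; push_cast; ring]
      rw [Complex.exp_add, Complex.exp_nat_mul, ← hzdef, ← hEdef, hcos]
      push_cast
      rw [div_neg]
      ring
    rw [Finset.sum_congr rfl step1, ← Finset.mul_sum]
    congr 1
    rw [Finset.sum_neg_distrib, Finset.mul_sum]
  have hsum : (∑ β ∈ Finset.range (N + 1), Cab a b ω N β * (((hr * (β:ℕ) + a : ℝ)) : ℂ))
      = E * (-(((hr:ℂ) * (1 + w - z) / w ^ 2 * (a:ℂ)))
          - (hr:ℂ) * (2 - z - z⁻¹) / w ^ 2
              * (∑ β ∈ Finset.Ico 1 N, z ^ β * ((hr:ℂ) * β + (a:ℂ)))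
          - (hr:ℂ) * (1 - w - z⁻¹) / w ^ 2 * (z ^ N * ((hr:ℂ) * N + (a:ℂ)))) := by
    rw [Finset.range_eq_Ico, Finset.sum_eq_sum_Ico_succ_bot (by omega),
      Finset.sum_Ico_succ_top (by omega : 1 ≤ N), e0, emid, eN]
    ring
  have key2 : (∑ β ∈ Finset.range (N + 1), Cab a b ω N β * (((hr * (β:ℕ) + a : ℝ)) : ℂ))
      = (Complex.exp (c * b) * b - Complex.exp (c * a) * a) / c
        - (Complex.exp (c * b) - Complex.exp (c * a)) / c ^ 2 := by
    rw [hsum, keyAlg z w _ _ hz hw N hN, hexpb, hb, hwdef]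
    push_cast
    rw [← hEdef]
    have hr0 : (hr:ℂ) ≠ 0 := Complex.ofReal_ne_zero.mpr hhr0
    field_simp
  constructor
  · rw [integral_exp_mul a b c hc, key2]
    ring
  · exact key2
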